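/- arXiv:1402.2331 — 4 statements merged into one kernel-verified Lean document; each statement's English description precedes it below -/
import Mathlib

section
/- Let a_1,…,a_n be positive reals with Σ a_i = 1 and suppose I ⊆ [n] satisfies Σ_{i∈I} a_i = Σ_{i∉I} a_i. Define θ_1 = 0 and θ_{m} = Σ_{i∈I, i<m} a_i − Σ_{i∉I, i<m} a_i for m = 2,…,n. Set u_{(i,1)} = (cos θ_i, sin θ_i), u_{(i,2)} = (sin θ_i, −cos θ_i) ∈ ℝ². Then for every i ∈ [n] (indices mod n): ⟨u_{(i,1)}, u_{(i+1,1)}⟩ = cos a_i, ⟨u_{(i,2)}, u_{(i+1,2)}⟩ = cos a_i, ‖u_{(i,1)}‖ = ‖u_{(i,2)}‖ = 1, and ⟨u_{(i,1)}, u_{(i,2)}⟩ = 0. -/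
open scoped RealInnerProductSpace

/-!
The angles θ are the partial sums of the signed weights σᵢ = ±aᵢ (sign + on I), so consecutive
angles differ by σᵢ and `cos (θ (i + 1) - θ i) = cos aᵢ`. The balance condition on I says
`∑ σᵢ = 0`, which is exactly what makes the wrap-around step from θₙ back to θ₁ = 0 equal to σₙ
as well. The rest is the identity `⟪(cos s, sin s), (cos t, sin t)⟫ = cos (t - s)`.
-/

open Finset

theorem Fin.sum_Iio_add_one_sub_sum_Iio {M : Type*} [AddCommGroup M] {n : ℕ}
    (f : Fin (n + 1) → M) (hf : ∑ i, f i = 0) (i : Fin (n + 1)) :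
    ∑ j ∈ Iio (i + 1), f j - ∑ j ∈ Iio i, f j = f i := by
  induction i using Fin.lastCases with
  | last =>
    rw [Fin.last_add_one, Fin.Iio_last_eq_map, sum_map,
      Iio_eq_empty.mpr fun _ _ => Fin.zero_le _, sum_empty, zero_sub]
    exact neg_eq_of_add_eq_zero_right (Fin.sum_univ_castSucc f ▸ hf)
  | cast j =>
    rw [Fin.Iio_add_one_eq_Iic (by simp), ← Iio_insert,
      sum_insert notMem_Iio_self, add_sub_cancel_right]

theorem Finset.sum_filter_mem_sub_sum_filter_notMem {ι R : Type*} [AddCommGroup R]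
    [DecidableEq ι] (s I : Finset ι) (a : ι → R) :
    ∑ i ∈ s with i ∈ I, a i - ∑ i ∈ s with i ∉ I, a i
      = ∑ i ∈ s, if i ∈ I then a i else -a i := by
  rw [sum_ite, sum_neg_distrib, sub_eq_add_neg]

theorem EuclideanSpace.inner_fin_two (x y : EuclideanSpace ℝ (Fin 2)) :
    ⟪x, y⟫ = x 0 * y 0 + x 1 * y 1 := by
  simp [PiLp.inner_apply, Fin.sum_univ_two, mul_comm]

theorem EuclideanSpace.norm_eq_one_of_fin_two {x : EuclideanSpace ℝ (Fin 2)}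
    (hx : x 0 ^ 2 + x 1 ^ 2 = 1) : ‖x‖ = 1 := by
  rw [← pow_eq_one_iff_of_nonneg (norm_nonneg x) two_ne_zero, ← real_inner_self_eq_norm_sq,
    EuclideanSpace.inner_fin_two, ← hx]
  ring

theorem cos_sub_of_signed_partial_sums {n : ℕ} (a : Fin (n + 1) → ℝ) (I : Finset (Fin (n + 1)))
    (hpart : ∑ i ∈ I, a i = ∑ i ∈ Iᶜ, a i) (θ : Fin (n + 1) → ℝ)
    (hθ : ∀ m, θ m = ∑ i with i < m ∧ i ∈ I, a i - ∑ i with i < m ∧ i ∉ I, a i)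
    (i : Fin (n + 1)) : Real.cos (θ (i + 1) - θ i) = Real.cos (a i) := by
  set σ : Fin (n + 1) → ℝ := fun i => if i ∈ I then a i else -a i
  have hσ : ∑ i, σ i = 0 := by
    rw [← sum_filter_mem_sub_sum_filter_notMem, filter_mem_eq_inter, univ_inter,
      filter_notMem_eq_sdiff, ← compl_eq_univ_sdiff, hpart, sub_self]
  have hθσ (m : Fin (n + 1)) : θ m = ∑ i ∈ Iio m, σ i := by
    rw [hθ, ← sum_filter_mem_sub_sum_filter_notMem, ← filter_gt_eq_Iio, filter_filter,
      filter_filter]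
  rw [hθσ, hθσ, Fin.sum_Iio_add_one_sub_sum_Iio σ hσ]
  by_cases hi : i ∈ I <;> simp [σ, hi]

theorem stmt11_general (n : ℕ) [NeZero n] (a : Fin n → ℝ) (I : Finset (Fin n))
    (hpart : ∑ i ∈ I, a i = ∑ i ∈ Iᶜ, a i)
    (θ : Fin n → ℝ)
    (hθ : ∀ m, θ m = ∑ i ∈ Finset.univ.filter (fun i => i < m ∧ i ∈ I), a i
                   - ∑ i ∈ Finset.univ.filter (fun i => i < m ∧ i ∉ I), a i)
    (u₁ u₂ : Fin n → EuclideanSpace ℝ (Fin 2))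
    (hu₁ : ∀ i, u₁ i 0 = Real.cos (θ i) ∧ u₁ i 1 = Real.sin (θ i))
    (hu₂ : ∀ i, u₂ i 0 = Real.sin (θ i) ∧ u₂ i 1 = -Real.cos (θ i)) :
    ∀ i : Fin n,
      ⟪u₁ i, u₁ (i + 1)⟫ = Real.cos (a i) ∧
      ⟪u₂ i, u₂ (i + 1)⟫ = Real.cos (a i) ∧
      ‖u₁ i‖ = 1 ∧ ‖u₂ i‖ = 1 ∧ ⟪u₁ i, u₂ i⟫ = 0 := by
  obtain ⟨n, rfl⟩ := Nat.exists_eq_succ_of_ne_zero (NeZero.ne n)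
  intro i
  have hcos := cos_sub_of_signed_partial_sums a I hpart θ hθ i
  rw [Real.cos_sub] at hcos
  obtain ⟨hu₁0, hu₁1⟩ := hu₁ i
  obtain ⟨hu₂0, hu₂1⟩ := hu₂ i
  obtain ⟨hu₁0', hu₁1'⟩ := hu₁ (i + 1)
  obtain ⟨hu₂0', hu₂1'⟩ := hu₂ (i + 1)
  refine ⟨?_, ?_, EuclideanSpace.norm_eq_one_of_fin_two ?_,
    EuclideanSpace.norm_eq_one_of_fin_two ?_, ?_⟩
  · rw [EuclideanSpace.inner_fin_two, hu₁0, hu₁1, hu₁0', hu₁1']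
    linear_combination hcos
  · rw [EuclideanSpace.inner_fin_two, hu₂0, hu₂1, hu₂0', hu₂1']
    linear_combination hcos
  · rw [hu₁0, hu₁1, Real.cos_sq_add_sin_sq]
  · rw [hu₂0, hu₂1, neg_sq, Real.sin_sq_add_cos_sq]
  · rw [EuclideanSpace.inner_fin_two, hu₁0, hu₁1, hu₂0, hu₂1]
    ring

/-- Completeness of the Partition reduction: a partition I of a_1,…,a_n
(positive, summing to 1) yields, via rotation angles θ, unit vectors
u_{(i,1)} = (cos θ_i, sin θ_i), u_{(i,2)} = (sin θ_i, −cos θ_i) in ℝ² that form orthonormal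
pairs with ⟨u_{(i,1)}, u_{(i+1,1)}⟩ = ⟨u_{(i,2)}, u_{(i+1,2)}⟩ = cos a_i (indices mod n). -/
theorem stmt11 (n : ℕ) [NeZero n] (a : Fin n → ℝ) (I : Finset (Fin n))
    (ha : ∀ i, 0 < a i) (hsum : ∑ i, a i = 1)
    (hpart : ∑ i ∈ I, a i = ∑ i ∈ Iᶜ, a i)
    (θ : Fin n → ℝ)
    (hθ : ∀ m, θ m = ∑ i ∈ Finset.univ.filter (fun i => i < m ∧ i ∈ I), a i
                   - ∑ i ∈ Finset.univ.filter (fun i => i < m ∧ i ∉ I), a i)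
    (u₁ u₂ : Fin n → EuclideanSpace ℝ (Fin 2))
    (hu₁ : ∀ i, u₁ i 0 = Real.cos (θ i) ∧ u₁ i 1 = Real.sin (θ i))
    (hu₂ : ∀ i, u₂ i 0 = Real.sin (θ i) ∧ u₂ i 1 = -Real.cos (θ i)) :
    ∀ i : Fin n,
      ⟪u₁ i, u₁ (i + 1)⟫ = Real.cos (a i) ∧
      ⟪u₂ i, u₂ (i + 1)⟫ = Real.cos (a i) ∧
      ‖u₁ i‖ = 1 ∧ ‖u₂ i‖ = 1 ∧ ⟪u₁ i, u₂ i⟫ = 0 :=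
  stmt11_general n a I hpart θ hθ u₁ u₂ hu₁ hu₂
end

section
/- Let u_1,…,u_n ∈ ℝ² be unit vectors such that ⟨u_i, u_{i+1}⟩ = cos a_i for i = 1,…,n−1 and ⟨u_n, u_1⟩ = cos a_n, where a_1,…,a_n > 0 and Σ a_i = 1. Then there exist signs s_1,…,s_n ∈ {−1,+1} with Σ_{j=1}^n s_j a_j = 0. -/
/-!
Fix an orientation of the plane. Unit vectors with inner product `cos θ` have oriented angle
`±θ`, so each oriented angle from `u i` to `u (i + 1)` is `s i * a i` for a sign `s i`. Around a
cycle the oriented angles add up to `0` modulo `2π`, so `∑ s i * a i` is a multiple of `2π`;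
since its absolute value is at most `∑ a i = 1 < π`, it is `0`.
-/

open scoped RealInnerProductSpace

theorem Real.Angle.eq_zero_of_coe_eq_zero {x : ℝ} (hx : |x| < Real.pi)
    (h : (x : Real.Angle) = 0) : x = 0 := by
  have hx' : -Real.pi < x ∧ x ≤ Real.pi := by
    constructor <;> linarith [neg_abs_le x, le_abs_self x]
  rw [← Real.Angle.toReal_coe_eq_self_iff.2 hx', h, Real.Angle.toReal_zero]

namespace Orientation

variable {V : Type*} [NormedAddCommGroup V] [InnerProductSpace ℝ V]
  [Fact (Module.finrank ℝ V = 2)] (o : Orientation ℝ V (Fin 2))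

theorem oangle_eq_or_eq_neg_of_inner_eq_cos {x y : V} {θ : ℝ} (hx : ‖x‖ = 1) (hy : ‖y‖ = 1)
    (h : ⟪x, y⟫ = Real.cos θ) : o.oangle x y = θ ∨ o.oangle x y = -θ := by
  have hx0 : x ≠ 0 := norm_ne_zero_iff.1 (by rw [hx]; exact one_ne_zero)
  have hy0 : y ≠ 0 := norm_ne_zero_iff.1 (by rw [hy]; exact one_ne_zero)
  rw [← Real.Angle.cos_eq_real_cos_iff_eq_or_eq_neg,
    o.cos_oangle_eq_inner_div_norm_mul_norm hx0 hy0, hx, hy, h, mul_one, div_one]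

theorem sum_oangle_cycle_eq_zero {n : ℕ} [NeZero n] {u : Fin n → V} (hu : ∀ i, u i ≠ 0) :
    ∑ i, o.oangle (u i) (u (i + 1)) = 0 := by
  have hdiff (i : Fin n) :
      o.oangle (u i) (u (i + 1)) = o.oangle (u 0) (u (i + 1)) - o.oangle (u 0) (u i) :=
    (o.oangle_sub_left (hu 0) (hu i) (hu (i + 1))).symm
  rw [Finset.sum_congr rfl fun i _ => hdiff i, Finset.sum_sub_distrib,
    Fintype.sum_equiv (Equiv.addRight 1) (fun i => o.oangle (u 0) (u (i + 1)))
      (fun i => o.oangle (u 0) (u i)) fun _ => rfl, sub_self]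

end Orientation

/-- Soundness of the Partition reduction: unit vectors u_1,…,u_n in ℝ² with
⟨u_i, u_{i+1}⟩ = cos a_i around the cycle, where a_i > 0 and Σ a_i = 1, give signs
s ∈ {±1}^n with Σ s_j a_j = 0. -/
theorem stmt12 (n : ℕ) [NeZero n] (a : Fin n → ℝ)
    (u : Fin n → EuclideanSpace ℝ (Fin 2))
    (ha : ∀ i, 0 < a i) (hsum : ∑ i, a i = 1)
    (hnorm : ∀ i, ‖u i‖ = 1)
    (hangle : ∀ i : Fin n, ⟪u i, u (i + 1)⟫ = Real.cos (a i)) :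
    ∃ s : Fin n → ℝ, (∀ i, s i = 1 ∨ s i = -1) ∧ ∑ i, s i * a i = 0 := by
  have : Fact (Module.finrank ℝ (EuclideanSpace ℝ (Fin 2)) = 2) := ⟨finrank_euclideanSpace_fin⟩
  let o : Orientation ℝ (EuclideanSpace ℝ (Fin 2)) (Fin 2) :=
    (EuclideanSpace.basisFun (Fin 2) ℝ).toBasis.orientation
  have hrot (i : Fin n) : ∃ s : ℝ, (s = 1 ∨ s = -1) ∧
      o.oangle (u i) (u (i + 1)) = ((s * a i : ℝ) : Real.Angle) := by
    rcases o.oangle_eq_or_eq_neg_of_inner_eq_cos (hnorm i) (hnorm (i + 1)) (hangle i) with h | h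
    · exact ⟨1, .inl rfl, by rw [h, one_mul]⟩
    · exact ⟨-1, .inr rfl, by rw [h, neg_one_mul, Real.Angle.coe_neg]⟩
  choose s hs hs_oangle using hrot
  refine ⟨s, hs, Real.Angle.eq_zero_of_coe_eq_zero ?_ ?_⟩
  · calc |∑ i, s i * a i| ≤ ∑ i, |s i * a i| := Finset.abs_sum_le_sum_abs _ _
      _ = ∑ i, a i := by
        refine Finset.sum_congr rfl fun i _ => ?_
        rcases hs i with h | h <;> simp [h, abs_of_pos (ha i)]
      _ < Real.pi := by linarith [Real.pi_gt_three]
  · have hu (i : Fin n) : u i ≠ 0 := norm_ne_zero_iff.1 (by rw [hnorm i]; exact one_ne_zero)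
    rw [← Real.Angle.coe_coeHom, map_sum, ← o.sum_oangle_cycle_eq_zero hu]
    exact Finset.sum_congr rfl fun i _ => (hs_oangle i).symm
end

section
/- Let u_1,…,u_d ∈ ℝ^r be vectors with |⟨u_i, u_j⟩ − δ_{ij}| ≤ ε for all i, j, where 0 ≤ ε < 1 is sufficiently small (ε < O(1/d) suffices). Then the Gram–Schmidt orthonormalization ũ_1,…,ũ_d of u_1,…,u_d satisfies ‖ũ_i − u_i‖ ≤ ε(1 + 2√d) for each i. -/
open scoped RealInnerProductSpace

/-!
Let `e i` be the normalized Gram–Schmidt vectors and `w n = f n - p n` the unnormalized ones,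
where `p n = ∑_{i<n} ⟪e i, f n⟫ • e i`; since `⟪e i, w n⟫ = 0`, Pythagoras gives
`‖f n‖² = ‖w n‖² + ‖p n‖²`. By strong induction, `|⟪e i, f k⟫| ≤ 2ε` for `i < k`, provided
`dε ≤ 1/8`: below `n` this gives `‖p n‖² ≤ 4dε² ≤ ε/2` and `|⟪p n, f k⟫| ≤ ε/2`, hence
`‖w n‖² ∈ [1 - 3ε/2, 1 + ε]`, `‖w n‖ ≥ 3/4` and `|⟪e n, f k⟫| = |⟪w n, f k⟫| / ‖w n‖ ≤ 2ε`.
Finally `‖e n - f n‖ ≤ |1 - ‖w n‖| + ‖p n‖ ≤ ε + 2ε√d`.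
-/

open Finset InnerProductSpace

theorem abs_sum_mul_le_card_mul_sq {α : Type*} (s : Finset α) {a b : α → ℝ} {δ : ℝ}
    (ha : ∀ i ∈ s, |a i| ≤ δ) (hb : ∀ i ∈ s, |b i| ≤ δ) :
    |∑ i ∈ s, a i * b i| ≤ #s * δ ^ 2 :=
  calc |∑ i ∈ s, a i * b i| ≤ ∑ i ∈ s, |a i * b i| := abs_sum_le_sum_abs _ _
    _ ≤ ∑ _i ∈ s, δ ^ 2 := sum_le_sum fun i hi => by
      rw [abs_mul, sq]
      exact mul_le_mul (ha i hi) (hb i hi) (abs_nonneg _) ((abs_nonneg _).trans (ha i hi))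
    _ = #s * δ ^ 2 := by rw [sum_const, nsmul_eq_mul]

theorem norm_inv_norm_smul_sub_self {E : Type*} [NormedAddCommGroup E] [NormedSpace ℝ E] {x : E}
    (hx : x ≠ 0) : ‖‖x‖⁻¹ • x - x‖ = |1 - ‖x‖| := by
  have hx' : ‖x‖ ≠ 0 := norm_ne_zero_iff.mpr hx
  have hsmul : ‖x‖⁻¹ • x - x = (‖x‖⁻¹ - 1) • x := by rw [sub_smul, one_smul]
  rw [hsmul, norm_smul, Real.norm_eq_abs, ← abs_norm x, ← abs_mul, abs_norm, sub_mul,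
    inv_mul_cancel₀ hx', one_mul]

section GramSchmidt

variable {E : Type*} [NormedAddCommGroup E] [InnerProductSpace ℝ E]
  {ι : Type*} [LinearOrder ι] [LocallyFiniteOrderBot ι] [WellFoundedLT ι] (f : ι → E)

theorem gramSchmidt_eq_sub_sum_inner_smul (n : ι) :
    gramSchmidt ℝ f n =
      f n - ∑ i ∈ Iio n, ⟪gramSchmidtNormed ℝ f i, f n⟫ • gramSchmidtNormed ℝ f i := by
  rw [gramSchmidt_def]
  congr 1
  refine sum_congr rfl fun i _ => ?_
  rw [Submodule.starProjection_singleton, gramSchmidtNormed, real_inner_smul_left, smul_smul]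
  congr 1
  simp only [RCLike.ofReal_real_eq_id, id]
  ring

theorem inner_gramSchmidtNormed_gramSchmidt {i n : ι} (h : i ≠ n) :
    ⟪gramSchmidtNormed ℝ f i, gramSchmidt ℝ f n⟫ = 0 := by
  rw [gramSchmidtNormed, real_inner_smul_left, gramSchmidt_orthogonal ℝ f h, mul_zero]

theorem inner_sub_gramSchmidt_left (n : ι) (x : E) :
    ⟪f n - gramSchmidt ℝ f n, x⟫ =
      ∑ i ∈ Iio n, ⟪gramSchmidtNormed ℝ f i, f n⟫ * ⟪gramSchmidtNormed ℝ f i, x⟫ := by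
  simp only [gramSchmidt_eq_sub_sum_inner_smul f n, sub_sub_cancel, sum_inner,
    real_inner_smul_left]

theorem norm_sub_gramSchmidt_sq (n : ι) :
    ‖f n - gramSchmidt ℝ f n‖ ^ 2 = ∑ i ∈ Iio n, ⟪gramSchmidtNormed ℝ f i, f n⟫ ^ 2 := by
  rw [← real_inner_self_eq_norm_sq, inner_sub_gramSchmidt_left]
  refine sum_congr rfl fun i hi => ?_
  rw [inner_sub_right, inner_gramSchmidtNormed_gramSchmidt f (mem_Iio.mp hi).ne, sub_zero, sq]

theorem norm_sq_eq_norm_gramSchmidt_sq_add (n : ι) :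
    ‖f n‖ ^ 2 = ‖gramSchmidt ℝ f n‖ ^ 2 + ‖f n - gramSchmidt ℝ f n‖ ^ 2 := by
  have h : ⟪gramSchmidt ℝ f n, f n - gramSchmidt ℝ f n⟫ = 0 := by
    rw [real_inner_comm, inner_sub_gramSchmidt_left]
    exact sum_eq_zero fun i hi => by
      rw [inner_gramSchmidtNormed_gramSchmidt f (mem_Iio.mp hi).ne, mul_zero]
  simpa [h] using norm_add_sq_real (gramSchmidt ℝ f n) (f n - gramSchmidt ℝ f n)

theorem orthonormal_gramSchmidtNormed_of_ne_zero (h : ∀ n, gramSchmidt ℝ f n ≠ 0) :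
    Orthonormal ℝ (gramSchmidtNormed ℝ f) :=
  ⟨fun n => by simp only [gramSchmidtNormed, norm_smul_inv_norm (h n)], fun i j hij => by
    simp only [gramSchmidtNormed, real_inner_smul_left, real_inner_smul_right,
      gramSchmidt_orthogonal ℝ f hij, mul_zero]⟩

theorem norm_sub_gramSchmidt_sq_le {n : ι} {δ : ℝ}
    (h : ∀ i < n, |⟪gramSchmidtNormed ℝ f i, f n⟫| ≤ δ) :
    ‖f n - gramSchmidt ℝ f n‖ ^ 2 ≤ #(Iio n) * δ ^ 2 := by
  have h' : ∀ i ∈ Iio n, |⟪gramSchmidtNormed ℝ f i, f n⟫| ≤ δ := fun i hi => h i (mem_Iio.mp hi)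
  rw [norm_sub_gramSchmidt_sq]
  refine le_trans ?_ (abs_sum_mul_le_card_mul_sq _ h' h')
  simp only [sq]
  exact le_abs_self _

theorem abs_inner_sub_gramSchmidt_le {n k : ι} {δ : ℝ}
    (hn : ∀ i < n, |⟪gramSchmidtNormed ℝ f i, f n⟫| ≤ δ)
    (hk : ∀ i < n, |⟪gramSchmidtNormed ℝ f i, f k⟫| ≤ δ) :
    |⟪f n - gramSchmidt ℝ f n, f k⟫| ≤ #(Iio n) * δ ^ 2 := by
  rw [inner_sub_gramSchmidt_left]
  exact abs_sum_mul_le_card_mul_sq _ (fun i hi => hn i (mem_Iio.mp hi))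
    (fun i hi => hk i (mem_Iio.mp hi))

end GramSchmidt

theorem card_Iio_mul_sq_le {ι : Type*} [LinearOrder ι] [LocallyFiniteOrderBot ι] [Fintype ι]
    {ε : ℝ} (hε : 0 ≤ ε) (hdε : Fintype.card ι * ε ≤ 1 / 8) (n : ι) :
    #(Iio n) * (2 * ε) ^ 2 ≤ ε / 2 := by
  have : (#(Iio n) : ℝ) ≤ Fintype.card ι := by exact_mod_cast card_le_univ _
  nlinarith

section NearlyOrthonormal

variable {E : Type*} [NormedAddCommGroup E] [InnerProductSpace ℝ E]
  {ι : Type*} [LinearOrder ι] [LocallyFiniteOrderBot ι] [WellFoundedLT ι] [Fintype ι]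
  {f : ι → E} {ε : ℝ}

theorem norm_gramSchmidt_sq_bounds (hε : 0 ≤ ε) (hdε : Fintype.card ι * ε ≤ 1 / 8)
    (hf : ∀ i j, |⟪f i, f j⟫ - if i = j then 1 else 0| ≤ ε) {n : ι}
    (h : ∀ i < n, |⟪gramSchmidtNormed ℝ f i, f n⟫| ≤ 2 * ε) :
    1 - 3 / 2 * ε ≤ ‖gramSchmidt ℝ f n‖ ^ 2 ∧ ‖gramSchmidt ℝ f n‖ ^ 2 ≤ 1 + ε := by
  have hn := hf n n
  rw [if_pos rfl, real_inner_self_eq_norm_sq, norm_sq_eq_norm_gramSchmidt_sq_add f n,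
    abs_le] at hn
  have := (norm_sub_gramSchmidt_sq_le f h).trans (card_Iio_mul_sq_le hε hdε n)
  constructor <;> nlinarith [sq_nonneg ‖f n - gramSchmidt ℝ f n‖]

theorem three_quarters_le_norm_gramSchmidt (hε : 0 ≤ ε) (hdε : Fintype.card ι * ε ≤ 1 / 8)
    (hf : ∀ i j, |⟪f i, f j⟫ - if i = j then 1 else 0| ≤ ε) {n : ι}
    (h : ∀ i < n, |⟪gramSchmidtNormed ℝ f i, f n⟫| ≤ 2 * ε) :
    3 / 4 ≤ ‖gramSchmidt ℝ f n‖ := by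
  have hd : (1 : ℝ) ≤ Fintype.card ι := by exact_mod_cast Fintype.card_pos_iff.mpr ⟨n⟩
  have := (norm_gramSchmidt_sq_bounds hε hdε hf h).1
  nlinarith [norm_nonneg (gramSchmidt ℝ f n)]

theorem abs_inner_gramSchmidtNormed_le_of_lt (hε : 0 ≤ ε) (hdε : Fintype.card ι * ε ≤ 1 / 8)
    (hf : ∀ i j, |⟪f i, f j⟫ - if i = j then 1 else 0| ≤ ε) {i k : ι} (hik : i < k) :
    |⟪gramSchmidtNormed ℝ f i, f k⟫| ≤ 2 * ε := by
  induction i using WellFoundedLT.induction generalizing k with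
  | _ n ih =>
  have hn : ∀ i < n, |⟪gramSchmidtNormed ℝ f i, f n⟫| ≤ 2 * ε := fun i hi => ih i hi hi
  have hk : ∀ i < n, |⟪gramSchmidtNormed ℝ f i, f k⟫| ≤ 2 * ε := fun i hi => ih i hi (hi.trans hik)
  have hw := three_quarters_le_norm_gramSchmidt hε hdε hf hn
  have hnk : |⟪f n, f k⟫| ≤ ε := by simpa [hik.ne] using hf n k
  have hp := (abs_inner_sub_gramSchmidt_le f hn hk).trans (card_Iio_mul_sq_le hε hdε n)
  have hsplit : ⟪gramSchmidtNormed ℝ f n, f k⟫ =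
      ‖gramSchmidt ℝ f n‖⁻¹ * (⟪f n, f k⟫ - ⟪f n - gramSchmidt ℝ f n, f k⟫) := by
    rw [gramSchmidtNormed, real_inner_smul_left, inner_sub_left, sub_sub_cancel]
    rfl
  rw [hsplit, abs_mul, abs_inv, abs_norm, inv_mul_le_iff₀ (by linarith)]
  calc |⟪f n, f k⟫ - ⟪f n - gramSchmidt ℝ f n, f k⟫|
      ≤ |⟪f n, f k⟫| + |⟪f n - gramSchmidt ℝ f n, f k⟫| := abs_sub _ _
    _ ≤ 3 / 4 * (2 * ε) := by linarith
    _ ≤ ‖gramSchmidt ℝ f n‖ * (2 * ε) := by gcongr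

theorem orthonormal_gramSchmidtNormed_of_near_orthonormal (hε : 0 ≤ ε)
    (hdε : Fintype.card ι * ε ≤ 1 / 8)
    (hf : ∀ i j, |⟪f i, f j⟫ - if i = j then 1 else 0| ≤ ε) :
    Orthonormal ℝ (gramSchmidtNormed ℝ f) :=
  orthonormal_gramSchmidtNormed_of_ne_zero f fun n => norm_pos_iff.mp <| by
    linarith [three_quarters_le_norm_gramSchmidt hε hdε hf (n := n) fun i hi =>
      abs_inner_gramSchmidtNormed_le_of_lt hε hdε hf hi]

theorem norm_gramSchmidtNormed_sub_le (hε : 0 ≤ ε) (hdε : Fintype.card ι * ε ≤ 1 / 8)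
    (hf : ∀ i j, |⟪f i, f j⟫ - if i = j then 1 else 0| ≤ ε) (n : ι) :
    ‖gramSchmidtNormed ℝ f n - f n‖ ≤ ε * (1 + 2 * √(Fintype.card ι)) := by
  have hn : ∀ i < n, |⟪gramSchmidtNormed ℝ f i, f n⟫| ≤ 2 * ε := fun i hi =>
    abs_inner_gramSchmidtNormed_le_of_lt hε hdε hf hi
  obtain ⟨hlo, hhi⟩ := norm_gramSchmidt_sq_bounds hε hdε hf hn
  have hw := three_quarters_le_norm_gramSchmidt hε hdε hf hn
  have hnorm : |1 - ‖gramSchmidt ℝ f n‖| ≤ ε := by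
    rw [abs_le]; constructor <;> nlinarith
  have hproj : ‖f n - gramSchmidt ℝ f n‖ ≤ 2 * ε * √(Fintype.card ι) := by
    rw [← sq_le_sq₀ (norm_nonneg _) (by positivity), mul_pow, Real.sq_sqrt (by positivity)]
    have : (#(Iio n) : ℝ) ≤ Fintype.card ι := by exact_mod_cast card_le_univ _
    calc ‖f n - gramSchmidt ℝ f n‖ ^ 2 ≤ #(Iio n) * (2 * ε) ^ 2 := norm_sub_gramSchmidt_sq_le f hn
      _ ≤ (2 * ε) ^ 2 * Fintype.card ι := by nlinarith [sq_nonneg (2 * ε)]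
  have hw0 : gramSchmidt ℝ f n ≠ 0 := norm_pos_iff.mp (by linarith)
  calc ‖gramSchmidtNormed ℝ f n - f n‖
      = ‖(‖gramSchmidt ℝ f n‖⁻¹ • gramSchmidt ℝ f n - gramSchmidt ℝ f n) -
          (f n - gramSchmidt ℝ f n)‖ := by
        rw [gramSchmidtNormed, sub_sub_sub_cancel_right]
        rfl
    _ ≤ |1 - ‖gramSchmidt ℝ f n‖| + ‖f n - gramSchmidt ℝ f n‖ := by
        rw [← norm_inv_norm_smul_sub_self hw0]
        exact norm_sub_le _ _
    _ ≤ ε + 2 * ε * √(Fintype.card ι) := add_le_add hnorm hproj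
    _ = ε * (1 + 2 * √(Fintype.card ι)) := by ring

end NearlyOrthonormal

/-- If u_1,…,u_d are ε-nearly orthonormal (|⟨u_i,u_j⟩ − δ_{ij}| ≤ ε) with
ε < O(1/d) sufficiently small, then there is an (Gram–Schmidt) orthonormal family
ũ_1,…,ũ_d with ‖ũ_i − u_i‖ ≤ ε(1 + 2√d) for each i. -/
theorem stmt13 :
    ∃ C : ℝ, 0 < C ∧
      ∀ (d r : ℕ) (u : Fin d → EuclideanSpace ℝ (Fin r)) (ε : ℝ),
        0 ≤ ε → ε < C / d →
        (∀ i j, |⟪u i, u j⟫ - (if i = j then (1 : ℝ) else 0)| ≤ ε) →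
        ∃ v : Fin d → EuclideanSpace ℝ (Fin r),
          (∀ i j, ⟪v i, v j⟫ = (if i = j then (1 : ℝ) else 0)) ∧
          ∀ i, ‖v i - u i‖ ≤ ε * (1 + 2 * Real.sqrt d) := by
  refine ⟨1 / 8, by norm_num, fun d r u ε hε hεd hu => ?_⟩
  have hdε : (Fintype.card (Fin d) : ℝ) * ε ≤ 1 / 8 := by
    rcases d.eq_zero_or_pos with rfl | hd
    · simp
    · rw [Fintype.card_fin, ← le_div_iff₀' (by exact_mod_cast hd)]
      exact hεd.le
  refine ⟨gramSchmidtNormed ℝ u,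
    orthonormal_iff_ite.mp (orthonormal_gramSchmidtNormed_of_near_orthonormal hε hdε hu),
    fun i => ?_⟩
  simpa using norm_gramSchmidtNormed_sub_le hε hdε hu i
end

section
/- Let u_1, u_2 ∈ ℝ^r be unit vectors with ⟨u_1, u_2⟩ = 0, and suppose w ∈ ℝ^r satisfies ‖w‖ ≤ √(1+ε), |⟨w, u_1⟩ − 1/√2| ≤ ε, and |⟨w, u_2⟩ − 1/√2| ≤ ε for some 0 ≤ ε ≤ 1. Then ‖w − (u_1 + u_2)/√2‖ ≤ √(ε(3 + 2√2)). -/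
open scoped RealInnerProductSpace

section

variable {E : Type*} [NormedAddCommGroup E] [InnerProductSpace ℝ E]

theorem norm_sub_smul_add_sq_of_orthonormal {u₁ u₂ : E} (h1 : ‖u₁‖ = 1) (h2 : ‖u₂‖ = 1)
    (horth : ⟪u₁, u₂⟫ = 0) (w : E) (c : ℝ) :
    ‖w - c • (u₁ + u₂)‖ ^ 2 = ‖w‖ ^ 2 + 2 * c ^ 2 - 2 * c * (⟪w, u₁⟫ + ⟪w, u₂⟫) := by
  rw [norm_sub_sq_real, inner_smul_right, inner_add_right, norm_smul, mul_pow,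
    norm_add_sq_real, horth, h1, h2, Real.norm_eq_abs, sq_abs]
  ring

end

theorem stmt15_general (d : ℕ) (u₁ u₂ w : EuclideanSpace ℝ (Fin d)) (ε : ℝ)
    (hε0 : 0 ≤ ε)
    (h1 : ‖u₁‖ = 1) (h2 : ‖u₂‖ = 1) (horth : ⟪u₁, u₂⟫ = 0)
    (hw : ‖w‖ ≤ Real.sqrt (1 + ε))
    (hw1 : |⟪w, u₁⟫ - 1 / Real.sqrt 2| ≤ ε)
    (hw2 : |⟪w, u₂⟫ - 1 / Real.sqrt 2| ≤ ε) :
    ‖w - (Real.sqrt 2)⁻¹ • (u₁ + u₂)‖ ≤ Real.sqrt (ε * (3 + 2 * Real.sqrt 2)) := by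
  have hsqrt2 : Real.sqrt 2 ^ 2 = 2 := Real.sq_sqrt zero_le_two
  have hsqrt2_pos : 0 < Real.sqrt 2 := by positivity
  have hw_sq : ‖w‖ ^ 2 ≤ 1 + ε := by
    simpa [Real.sq_sqrt (by linarith : (0 : ℝ) ≤ 1 + ε)] using
      pow_le_pow_left₀ (norm_nonneg w) hw 2
  have hwu₁ := (abs_le.1 hw1).1
  have hwu₂ := (abs_le.1 hw2).1
  have hbound : ‖w - (Real.sqrt 2)⁻¹ • (u₁ + u₂)‖ ^ 2 ≤ ε * (3 + 2 * Real.sqrt 2) :=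
    calc ‖w - (Real.sqrt 2)⁻¹ • (u₁ + u₂)‖ ^ 2
        = ‖w‖ ^ 2 + 1 - Real.sqrt 2 * (⟪w, u₁⟫ + ⟪w, u₂⟫) := by
          rw [norm_sub_smul_add_sq_of_orthonormal h1 h2 horth]
          field_simp
          rw [hsqrt2]
          ring
      _ ≤ (1 + ε) + 1 - Real.sqrt 2 * (2 * (1 / Real.sqrt 2 - ε)) := by
        gcongr
        linarith
      _ = ε * (1 + 2 * Real.sqrt 2) := by
        field_simp
        ring
      _ ≤ ε * (3 + 2 * Real.sqrt 2) := by gcongr; norm_num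
  exact Real.le_sqrt_of_sq_le hbound

/-- If u₁, u₂ are orthonormal, ‖w‖ ≤ √(1+ε), and ⟨w,u₁⟩, ⟨w,u₂⟩ are within ε
of 1/√2, then ‖w − (u₁+u₂)/√2‖ ≤ √(ε(3 + 2√2)). -/
theorem stmt15 (d : ℕ) (u₁ u₂ w : EuclideanSpace ℝ (Fin d)) (ε : ℝ)
    (hε0 : 0 ≤ ε) (hε1 : ε ≤ 1)
    (h1 : ‖u₁‖ = 1) (h2 : ‖u₂‖ = 1) (horth : ⟪u₁, u₂⟫ = 0)
    (hw : ‖w‖ ≤ Real.sqrt (1 + ε))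
    (hw1 : |⟪w, u₁⟫ - 1 / Real.sqrt 2| ≤ ε)
    (hw2 : |⟪w, u₂⟫ - 1 / Real.sqrt 2| ≤ ε) :
    ‖w - (Real.sqrt 2)⁻¹ • (u₁ + u₂)‖ ≤ Real.sqrt (ε * (3 + 2 * Real.sqrt 2)) :=
  stmt15_general d u₁ u₂ w ε hε0 h1 h2 horth hw hw1 hw2
end
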